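/- arXiv:2101.08830 — 3 statements merged into one kernel-verified Lean document; each statement's English description precedes it below -/
import Mathlib

section
/- Let C ⊆ ℝⁿ be a nonempty closed convex set and f : ℝⁿ → ℝ be continuously differentiable with ∇f L-Lipschitz on C (L > 0) and satisfying condition (B) on C. Let (x^k), (p^k), (v_k) be Frank–Wolfe sequences for f on C with v_k < 0 for all k. Then every limit point x̄ ∈ C of (x^k) is a stationary point of the problem min_{z∈C} f(z), i.e., ⟨∇f(x̄), q − x̄⟩ ≥ 0 for all q ∈ C. -/
open scoped RealInnerProductSpace
open Filter Topology Set

/-!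
The Lipschitz gradient yields the descent estimate `f (x + λ d) ≤ f x + λ v + L λ² ‖d‖² / 2`,
and the step size `λ_k` is small enough that the decrease is at least `λ_k |v_k| / 2`. As
`f (x^k)` is nonincreasing and converges along the subsequence, `λ_k |v_k| → 0`. If `x̄` were
not stationary, `|v_k|` would stay bounded away from `0` along the subsequence, forcing
`λ_k → 0` and hence `‖p^k - x^k‖ → ∞`. A limit `u` of the unit directions of `p^k - x^k` is then
a nonzero asymptotic direction of `C` with `⟪∇f x̄, u⟫ ≤ 0`, contradicting condition (B).
-/

theorem le_add_deriv_add_of_deriv_le {g g' : ℝ → ℝ} {M : ℝ}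
    (hg : ∀ t ∈ Icc (0 : ℝ) 1, HasDerivAt g (g' t) t)
    (hg' : ∀ t ∈ Icc (0 : ℝ) 1, g' t ≤ g' 0 + M * t) :
    g 1 ≤ g 0 + g' 0 + M / 2 := by
  have hB : ∀ t : ℝ, HasDerivAt (fun t => g 0 + g' 0 * t + M / 2 * t ^ 2) (g' 0 + M * t) t :=
    fun t => (((hasDerivAt_id' t).const_mul (g' 0)).const_add (g 0) |>.add
      ((hasDerivAt_pow 2 t).const_mul (M / 2))).congr_deriv (by ring)
  have key := image_le_of_deriv_right_le_deriv_boundary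
    (fun t ht => (hg t ht).continuousAt.continuousWithinAt)
    (fun t ht => (hg t (Ico_subset_Icc_self ht)).hasDerivWithinAt) (by simp)
    (fun t _ => (hB t).continuousAt.continuousWithinAt) (fun t _ => (hB t).hasDerivWithinAt)
    (fun t ht => hg' t (Ico_subset_Icc_self ht)) (right_mem_Icc.2 zero_le_one)
  simpa using key

section Gradient

variable {F : Type*} [NormedAddCommGroup F] [InnerProductSpace ℝ F] [CompleteSpace F]

theorem ContDiff.continuous_gradient {f : F → ℝ} (hf : ContDiff ℝ 1 f) :
    Continuous (gradient f) :=
  (InnerProductSpace.toDual ℝ F).symm.continuous.comp (hf.continuous_fderiv one_ne_zero)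

theorem Convex.apply_le_add_inner_gradient_add_sq {C : Set F} (hC : Convex ℝ C) {f : F → ℝ}
    (hf : Differentiable ℝ f) {L : ℝ}
    (hLip : ∀ a ∈ C, ∀ b ∈ C, ‖gradient f a - gradient f b‖ ≤ L * ‖a - b‖)
    {x y : F} (hx : x ∈ C) (hy : y ∈ C) :
    f y ≤ f x + ⟪gradient f x, y - x⟫ + L / 2 * ‖y - x‖ ^ 2 := by
  have key := le_add_deriv_add_of_deriv_le (g := fun t : ℝ => f (x + t • (y - x)))
    (g' := fun t => ⟪gradient f (x + t • (y - x)), y - x⟫) (M := L * ‖y - x‖ ^ 2) ?_ ?_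
  · simp only [zero_smul, add_zero, one_smul, add_sub_cancel] at key
    linarith
  · intro t _
    have h := (hf _).hasGradientAt.hasFDerivAt.comp_hasDerivAt t
      (((hasDerivAt_id t).smul_const (y - x)).const_add x)
    rwa [one_smul, InnerProductSpace.toDual_apply_apply] at h
  · intro t ht
    simp only [zero_smul, add_zero]
    calc ⟪gradient f (x + t • (y - x)), y - x⟫
        = ⟪gradient f x, y - x⟫ + ⟪gradient f (x + t • (y - x)) - gradient f x, y - x⟫ := by
          rw [inner_sub_left]; ring
      _ ≤ ⟪gradient f x, y - x⟫ + L * ‖x + t • (y - x) - x‖ * ‖y - x‖ := by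
          gcongr
          exact (real_inner_le_norm _ _).trans <| mul_le_mul_of_nonneg_right
            (hLip _ (hC.add_smul_sub_mem hx hy ht) x hx) (norm_nonneg _)
      _ = ⟪gradient f x, y - x⟫ + L * ‖y - x‖ ^ 2 * t := by
          rw [add_sub_cancel_left, norm_smul, Real.norm_of_nonneg ht.1]; ring

end Gradient

section FrankWolfeStep

variable {E : Type*} [SeminormedAddCommGroup E]

-- The step size `λ_k`; it is `0` when `L * ‖d‖ ^ 2 = 0`, since then the division returns `0`.
noncomputable def frankWolfeStep (L v : ℝ) (d : E) : ℝ :=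
  min 1 (|v| / (L * ‖d‖ ^ 2))

theorem frankWolfeStep_nonneg {L : ℝ} (hL : 0 ≤ L) (v : ℝ) (d : E) :
    0 ≤ frankWolfeStep L v d :=
  le_min zero_le_one (by positivity)

theorem frankWolfeStep_le_one (L v : ℝ) (d : E) : frankWolfeStep L v d ≤ 1 :=
  min_le_left _ _

theorem frankWolfeStep_mul_le {L : ℝ} (hL : 0 ≤ L) (v : ℝ) (d : E) :
    frankWolfeStep L v d * (L * ‖d‖ ^ 2) ≤ |v| := by
  rcases (mul_nonneg hL (sq_nonneg ‖d‖)).eq_or_lt with h | h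
  · rw [← h, mul_zero]; exact abs_nonneg v
  · exact (le_div_iff₀ h).1 (min_le_right _ _)

end FrankWolfeStep

theorem Convex.apply_add_frankWolfeStep_smul_le {F : Type*} [NormedAddCommGroup F]
    [InnerProductSpace ℝ F] [CompleteSpace F] {C : Set F} (hC : Convex ℝ C) {f : F → ℝ}
    (hf : Differentiable ℝ f) {L : ℝ} (hL : 0 ≤ L)
    (hLip : ∀ a ∈ C, ∀ b ∈ C, ‖gradient f a - gradient f b‖ ≤ L * ‖a - b‖)
    {x p : F} (hx : x ∈ C) (hp : p ∈ C) (hv : ⟪gradient f x, p - x⟫ ≤ 0) :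
    f (x + frankWolfeStep L ⟪gradient f x, p - x⟫ (p - x) • (p - x)) ≤
      f x - frankWolfeStep L ⟪gradient f x, p - x⟫ (p - x) * |⟪gradient f x, p - x⟫| / 2 := by
  set v := ⟪gradient f x, p - x⟫
  set γ := frankWolfeStep L v (p - x)
  have hγ0 : 0 ≤ γ := frankWolfeStep_nonneg hL v (p - x)
  have hγ := frankWolfeStep_mul_le hL v (p - x)
  have hdesc := hC.apply_le_add_inner_gradient_add_sq hf hLip hx
    (hC.add_smul_sub_mem hx hp ⟨hγ0, frankWolfeStep_le_one L v (p - x)⟩)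
  rw [add_sub_cancel_left, real_inner_smul_right, norm_smul, Real.norm_of_nonneg hγ0] at hdesc
  rw [abs_of_nonpos hv] at hγ ⊢
  nlinarith [mul_le_mul_of_nonneg_left hγ hγ0]

theorem tendsto_norm_atTop_of_frankWolfeStep_mul_tendsto_zero {E : Type*}
    [NormedAddCommGroup E] {L ε : ℝ} (hL : 0 < L) (hε : 0 < ε) {v : ℕ → ℝ} {d : ℕ → E}
    (hd : ∀ j, d j ≠ 0) (hv : ∀ᶠ j in atTop, ε ≤ |v j|)
    (hγv : Tendsto (fun j => frankWolfeStep L (v j) (d j) * |v j|) atTop (𝓝 0)) :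
    Tendsto (fun j => ‖d j‖) atTop atTop := by
  set γ := fun j => frankWolfeStep L (v j) (d j)
  have hγ : Tendsto γ atTop (𝓝 0) := by
    refine squeeze_zero' (Eventually.of_forall fun j => frankWolfeStep_nonneg hL.le _ _)
      (hv.mono fun j hj => ?_) (by simpa using hγv.div_const ε)
    rw [le_div_iff₀ hε]
    exact mul_le_mul_of_nonneg_left hj (frankWolfeStep_nonneg hL.le _ _)
  have hγpos : ∀ᶠ j in atTop, 0 < γ j := hv.mono fun j hj =>
    lt_min one_pos (div_pos (hε.trans_le hj) (by have := norm_pos_iff.2 (hd j); positivity))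
  have hsq : Tendsto (fun j => ‖d j‖ ^ 2) atTop atTop := by
    refine tendsto_atTop_mono' _ ?_ ((Tendsto.inv_tendsto_nhdsGT_zero
      (tendsto_nhdsWithin_iff.2 ⟨hγ, hγpos⟩)).const_mul_atTop (div_pos hε hL))
    filter_upwards [hv, hγpos, hγ.eventually (eventually_lt_nhds one_pos)] with j hvj hγ0 hγ1
    have hd2 : 0 < L * ‖d j‖ ^ 2 := by have := norm_pos_iff.2 (hd j); positivity
    have hγeq : γ j * (L * ‖d j‖ ^ 2) = |v j| := by
      have hlt : |v j| / (L * ‖d j‖ ^ 2) < 1 := by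
        simpa [γ, frankWolfeStep, min_lt_iff] using hγ1
      rw [show γ j = |v j| / (L * ‖d j‖ ^ 2) from min_eq_right hlt.le, div_mul_cancel₀ _ hd2.ne']
    calc ε / L * (γ j)⁻¹ ≤ |v j| / L * (γ j)⁻¹ := by gcongr
      _ = ‖d j‖ ^ 2 := by rw [← hγeq]; field_simp
  exact (Real.tendsto_sqrt_atTop.comp hsq).congr fun j => Real.sqrt_sq (norm_nonneg _)

theorem Convex.seq_mem_of_add_smul_sub {E : Type*} [AddCommGroup E] [Module ℝ E] {C : Set E}
    (hC : Convex ℝ C) {x p : ℕ → E} {γ : ℕ → ℝ} (hx0 : x 0 ∈ C) (hp : ∀ k, p k ∈ C)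
    (hγ : ∀ k, γ k ∈ Icc 0 1) (hx : ∀ k, x (k + 1) = x k + γ k • (p k - x k)) :
    ∀ k, x k ∈ C
  | 0 => hx0
  | k + 1 => hx k ▸ hC.add_smul_sub_mem (hC.seq_mem_of_add_smul_sub hx0 hp hγ hx k) (hp k) (hγ k)

theorem tendsto_zero_of_le_sub_of_tendsto_subseq {u a : ℕ → ℝ}
    (hdec : ∀ k, u (k + 1) ≤ u k - a k) (ha : ∀ k, 0 ≤ a k) {φ : ℕ → ℕ} (hφ : StrictMono φ)
    {l : ℝ} (hl : Tendsto (fun j => u (φ j)) atTop (𝓝 l)) : Tendsto a atTop (𝓝 0) := by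
  have hanti : Antitone u := antitone_nat_of_succ_le fun k => by linarith [hdec k, ha k]
  have hu : Tendsto u atTop (𝓝 l) :=
    (tendsto_iff_tendsto_subseq_of_antitone hanti hφ.tendsto_atTop).2 hl
  have hgap : Tendsto (fun k => u k - u (k + 1)) atTop (𝓝 0) := by
    simpa using hu.sub (hu.comp (tendsto_add_atTop_nat 1))
  exact squeeze_zero ha (fun k => by linarith [hdec k]) hgap

theorem exists_mem_asymptoticCone_of_tendsto_norm_sub {E : Type*} [NormedAddCommGroup E]
    [NormedSpace ℝ E] [ProperSpace E] {C : Set E} {x p : ℕ → E} {xbar : E}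
    (hp : ∀ j, p j ∈ C) (hx : Tendsto x atTop (𝓝 xbar))
    (hd : Tendsto (fun j => ‖p j - x j‖) atTop atTop) :
    ∃ u ∈ asymptoticCone ℝ C, u ≠ 0 ∧ ∃ ψ : ℕ → ℕ, StrictMono ψ ∧
      Tendsto (fun j => ‖p (ψ j) - x (ψ j)‖⁻¹ • (p (ψ j) - x (ψ j))) atTop (𝓝 u) := by
  have hsphere : ∃ᶠ j in atTop, ‖p j - x j‖⁻¹ • (p j - x j) ∈ Metric.sphere (0 : E) 1 :=
    (hd.eventually_gt_atTop 0).frequently.mono fun j hj => by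
      simp [norm_smul, hj.ne']
  obtain ⟨u, hu, ψ, hψ, hlim⟩ := (isCompact_sphere (0 : E) 1).tendsto_subseq' hsphere
  refine ⟨u, ?_, Metric.ne_of_mem_sphere hu one_ne_zero, ψ, hψ, hlim⟩
  have hdψ := hd.comp hψ.tendsto_atTop
  -- `p = ‖p - x‖ • (unit direction + ‖p - x‖⁻¹ • x)` exhibits `p` going to infinity along `u`
  have hshift : Tendsto (fun j => ‖p (ψ j) - x (ψ j)‖⁻¹ • (p (ψ j) - x (ψ j)) +
      ‖p (ψ j) - x (ψ j)‖⁻¹ • x (ψ j)) atTop (𝓝 u) := by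
    simpa using hlim.add ((tendsto_inv_atTop_zero.comp hdψ).smul (hx.comp hψ.tendsto_atTop))
  have hpψ := (hdψ.atTop_smul_nhds_tendsto_asymptoticNhds (k := ℝ) hshift).congr'
    (f₂ := fun j => p (ψ j)) <|
    (hdψ.eventually_gt_atTop 0).mono fun j (hj : 0 < ‖p (ψ j) - x (ψ j)‖) => by
      simp [← smul_add, smul_smul, mul_inv_cancel₀ hj.ne']
  exact mem_asymptoticCone_iff.2 (hpψ.frequently (Frequently.of_forall fun j => hp (ψ j)))

theorem exists_mem_asymptoticCone_inner_nonpos {F : Type*} [NormedAddCommGroup F]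
    [InnerProductSpace ℝ F] [ProperSpace F] {C : Set F} {g : F → F} {x p : ℕ → F} {xbar : F}
    (hg : ContinuousAt g xbar) (hp : ∀ j, p j ∈ C) (hx : Tendsto x atTop (𝓝 xbar))
    (hd : Tendsto (fun j => ‖p j - x j‖) atTop atTop) (hv : ∀ j, ⟪g (x j), p j - x j⟫ ≤ 0) :
    ∃ u ∈ asymptoticCone ℝ C, u ≠ 0 ∧ ⟪g xbar, u⟫ ≤ 0 := by
  obtain ⟨u, hu, hu0, ψ, hψ, hw⟩ := exists_mem_asymptoticCone_of_tendsto_norm_sub hp hx hd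
  refine ⟨u, hu, hu0, le_of_tendsto' ((hg.tendsto.comp (hx.comp hψ.tendsto_atTop)).inner hw)
    fun j => ?_⟩
  simp only [Function.comp_apply, real_inner_smul_right]
  exact mul_nonpos_of_nonneg_of_nonpos (by positivity) (hv _)

theorem frank_wolfe_limit_point_stationary_general (n : ℕ) (C : Set (EuclideanSpace ℝ (Fin n)))
    (hCcl : IsClosed C) (hCconv : Convex ℝ C)
    (f : EuclideanSpace ℝ (Fin n) → ℝ) (hf : ContDiff ℝ 1 f)
    (L : ℝ) (hL : 0 < L)
    (hLip : ∀ a ∈ C, ∀ b ∈ C, ‖gradient f a - gradient f b‖ ≤ L * ‖a - b‖)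
    (hB : ∀ a ∈ C, ∀ d : EuclideanSpace ℝ (Fin n),
      (∀ y ∈ C, ∀ t : ℝ, 0 ≤ t → y + t • d ∈ C) → d ≠ 0 → 0 < ⟪gradient f a, d⟫)
    (x p : ℕ → EuclideanSpace ℝ (Fin n)) (v : ℕ → ℝ)
    (hx0 : x 0 ∈ C) (hpC : ∀ k, p k ∈ C)
    (hpmin : ∀ k, ∀ q ∈ C, ⟪gradient f (x k), p k - x k⟫ ≤ ⟪gradient f (x k), q - x k⟫)
    (hv : ∀ k, v k = ⟪gradient f (x k), p k - x k⟫)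
    (hiter : ∀ k, x (k + 1) =
      x k + (min 1 (|v k| / (L * ‖p k - x k‖ ^ 2))) • (p k - x k))
    (hvneg : ∀ k, v k < 0)
    (xbar : EuclideanSpace ℝ (Fin n)) (hxbar : xbar ∈ C)
    (hlim : ∃ φ : ℕ → ℕ, StrictMono φ ∧
      Filter.Tendsto (fun j => x (φ j)) Filter.atTop (nhds xbar)) :
    ∀ q ∈ C, 0 ≤ ⟪gradient f xbar, q - xbar⟫ := by
  intro q hq
  obtain ⟨φ, hφ, hxφ⟩ := hlim
  have hxC : ∀ k, x k ∈ C := hCconv.seq_mem_of_add_smul_sub hx0 hpC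
    (fun k => ⟨frankWolfeStep_nonneg hL.le _ _, frankWolfeStep_le_one _ _ _⟩) hiter
  have hdec : ∀ k, f (x (k + 1)) ≤ f (x k) - frankWolfeStep L (v k) (p k - x k) * |v k| / 2 := by
    intro k
    rw [hiter k, hv k]
    exact hCconv.apply_add_frankWolfeStep_smul_le (hf.differentiable one_ne_zero) hL.le hLip
      (hxC k) (hpC k) (hv k ▸ (hvneg k).le)
  have hstep : Tendsto (fun k => frankWolfeStep L (v k) (p k - x k) * |v k|) atTop (𝓝 0) := by
    have := tendsto_zero_of_le_sub_of_tendsto_subseq hdec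
      (fun k => div_nonneg (mul_nonneg (frankWolfeStep_nonneg hL.le _ _) (abs_nonneg _))
        zero_le_two) hφ (u := fun k => f (x k)) ((hf.continuous.tendsto xbar).comp hxφ)
    simpa [mul_div_cancel₀] using this.const_mul 2
  by_contra! hneg
  have hgrad := hf.continuous_gradient
  have hvφ : ∀ᶠ j in atTop, -⟪gradient f xbar, q - xbar⟫ / 2 ≤ |v (φ j)| := by
    have hlim : Tendsto (fun j => ⟪gradient f (x (φ j)), q - x (φ j)⟫) atTop
        (𝓝 ⟪gradient f xbar, q - xbar⟫) :=
      ((hgrad.tendsto xbar).comp hxφ).inner (tendsto_const_nhds.sub hxφ)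
    filter_upwards [hlim.eventually (eventually_le_nhds (by linarith :
      ⟪gradient f xbar, q - xbar⟫ < ⟪gradient f xbar, q - xbar⟫ / 2))] with j hj
    rw [abs_of_neg (hvneg _)]
    linarith [hv (φ j), hpmin (φ j) q hq]
  have hd : ∀ k, p k - x k ≠ 0 := fun k h => (hvneg k).ne' (by rw [hv k, h, inner_zero_right])
  have hnorm := tendsto_norm_atTop_of_frankWolfeStep_mul_tendsto_zero hL (by linarith)
    (fun j => hd (φ j)) hvφ (hstep.comp hφ.tendsto_atTop)
  obtain ⟨u, hu, hu0, hdir⟩ := exists_mem_asymptoticCone_inner_nonpos (hgrad.tendsto xbar)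
    (fun j => hpC (φ j)) hxφ hnorm fun j => hv (φ j) ▸ (hvneg (φ j)).le
  have hray : ∀ y ∈ C, ∀ t : ℝ, 0 ≤ t → y + t • u ∈ C := fun y hy t ht => by
    simpa [add_comm] using hCconv.smul_vadd_mem_of_isClosed_of_mem_asymptoticCone hCcl ht hu hy
  exact (hB xbar hxbar u hray hu0).not_ge hdir

/-- Every limit point `x̄ ∈ C` of a Frank–Wolfe sequence (under Lipschitz gradient and
condition (B)) is a stationary point of the problem of minimizing `f` over `C`. -/
theorem frank_wolfe_limit_point_stationary (n : ℕ) (C : Set (EuclideanSpace ℝ (Fin n)))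
    (hCne : C.Nonempty) (hCcl : IsClosed C) (hCconv : Convex ℝ C)
    (f : EuclideanSpace ℝ (Fin n) → ℝ) (hf : ContDiff ℝ 1 f)
    (L : ℝ) (hL : 0 < L)
    (hLip : ∀ a ∈ C, ∀ b ∈ C, ‖gradient f a - gradient f b‖ ≤ L * ‖a - b‖)
    (hB : ∀ a ∈ C, ∀ d : EuclideanSpace ℝ (Fin n),
      (∀ y ∈ C, ∀ t : ℝ, 0 ≤ t → y + t • d ∈ C) → d ≠ 0 → 0 < ⟪gradient f a, d⟫)
    (x p : ℕ → EuclideanSpace ℝ (Fin n)) (v : ℕ → ℝ)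
    (hx0 : x 0 ∈ C) (hpC : ∀ k, p k ∈ C)
    (hpmin : ∀ k, ∀ q ∈ C, ⟪gradient f (x k), p k - x k⟫ ≤ ⟪gradient f (x k), q - x k⟫)
    (hv : ∀ k, v k = ⟪gradient f (x k), p k - x k⟫)
    (hiter : ∀ k, x (k + 1) =
      x k + (min 1 (|v k| / (L * ‖p k - x k‖ ^ 2))) • (p k - x k))
    (hvneg : ∀ k, v k < 0)
    (xbar : EuclideanSpace ℝ (Fin n)) (hxbar : xbar ∈ C)
    (hlim : ∃ φ : ℕ → ℕ, StrictMono φ ∧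
      Filter.Tendsto (fun j => x (φ j)) Filter.atTop (nhds xbar)) :
    ∀ q ∈ C, 0 ≤ ⟪gradient f xbar, q - xbar⟫ :=
  frank_wolfe_limit_point_stationary_general n C hCcl hCconv f hf L hL hLip hB x p v hx0 hpC hpmin
    hv hiter hvneg xbar hxbar hlim
end

section
/- Let C ⊆ ℝⁿ be a nonempty closed convex set, f : ℝⁿ → ℝ be continuously differentiable with ∇f L-Lipschitz on C (L > 0), and let (x^k), (p^k), (v_k) be Frank–Wolfe sequences for f on C with v_k < 0 for all k. Suppose σ > 0 satisfies ‖p^k − x^k‖ ≤ σ for all k, γ > 0 satisfies ‖∇f(x^k)‖ ≤ γ for all k, and set Γ := min{1/(2γσ), 1/(2Lσ²)}. Then Γ·v_k² ≤ f(x^k) − f(x^{k+1}) for all k = 0, 1, …. -/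
/-!
By the descent lemma for a gradient that is `L`-Lipschitz on the convex set `C`,
`f (x (k+1)) ≤ f (x k) + λₖ vₖ + L/2 λₖ² ‖pₖ - xₖ‖²`. The clipped step `λₖ` minimizes this
quadratic model over `[0, 1]`, so the decrease is at least
`min (|vₖ|/2) (vₖ²/(2L‖pₖ - xₖ‖²))`; Cauchy–Schwarz gives `|vₖ| ≤ γσ`, and with
`‖pₖ - xₖ‖ ≤ σ` both terms of the minimum dominate `Γ vₖ²`.
-/

open scoped RealInnerProductSpace
open Set

section Descent

variable {E : Type*} [NormedAddCommGroup E] [InnerProductSpace ℝ E] [CompleteSpace E]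
  {f : E → ℝ}

theorem DifferentiableAt.hasDerivAt_comp_add_smul {a d : E} {t : ℝ}
    (hf : DifferentiableAt ℝ f (a + t • d)) :
    HasDerivAt (fun s : ℝ => f (a + s • d)) ⟪gradient f (a + t • d), d⟫ t := by
  have hline : HasDerivAt (fun s : ℝ => a + s • d) d t := by
    simpa using ((hasDerivAt_id t).smul_const d).const_add a
  have := hf.hasGradientAt.hasFDerivAt.comp_hasDerivAt t hline
  simp only [InnerProductSpace.toDual_apply_apply] at this
  exact this

theorem Convex.le_add_inner_gradient_add_half_mul_sq (hf : Differentiable ℝ f) {s : Set E}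
    (hs : Convex ℝ s) {L : ℝ}
    (hLip : ∀ a ∈ s, ∀ b ∈ s, ‖gradient f a - gradient f b‖ ≤ L * ‖a - b‖)
    {a b : E} (ha : a ∈ s) (hb : b ∈ s) :
    f b ≤ f a + ⟪gradient f a, b - a⟫ + L / 2 * ‖b - a‖ ^ 2 := by
  set d := b - a
  have hderiv (t : ℝ) : HasDerivAt (fun t : ℝ => f (a + t • d)) ⟪gradient f (a + t • d), d⟫ t :=
    (hf _).hasDerivAt_comp_add_smul
  have hB (t : ℝ) : HasDerivAt (fun t : ℝ => f a + t * ⟪gradient f a, d⟫ + L / 2 * t ^ 2 * ‖d‖ ^ 2)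
      (⟪gradient f a, d⟫ + L * t * ‖d‖ ^ 2) t := by
    refine ((((hasDerivAt_id' t).mul_const _).const_add (f a)).add
      ((((hasDerivAt_id' t).pow 2).const_mul (L / 2)).mul_const (‖d‖ ^ 2))).congr_deriv ?_
    simp only [Nat.cast_ofNat]
    ring
  have hbound (t : ℝ) (ht : t ∈ Ico (0 : ℝ) 1) :
      ⟪gradient f (a + t • d), d⟫ ≤ ⟪gradient f a, d⟫ + L * t * ‖d‖ ^ 2 := by
    have hmem : a + t • d ∈ s := hs.add_smul_sub_mem ha hb (Ico_subset_Icc_self ht)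
    calc ⟪gradient f (a + t • d), d⟫
        = ⟪gradient f a, d⟫ + ⟪gradient f (a + t • d) - gradient f a, d⟫ := by
          rw [inner_sub_left]; ring
      _ ≤ ⟪gradient f a, d⟫ + ‖gradient f (a + t • d) - gradient f a‖ * ‖d‖ := by
          gcongr; exact real_inner_le_norm _ _
      _ ≤ ⟪gradient f a, d⟫ + L * ‖t • d‖ * ‖d‖ := by
          gcongr; simpa using hLip _ hmem _ ha
      _ = ⟪gradient f a, d⟫ + L * t * ‖d‖ ^ 2 := by
          rw [norm_smul, Real.norm_of_nonneg ht.1]; ring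
  have := image_le_of_deriv_right_le_deriv_boundary
    (fun t _ => (hderiv t).continuousAt.continuousWithinAt)
    (fun t _ => (hderiv t).hasDerivWithinAt) (by simp)
    (fun t _ => (hB t).continuousAt.continuousWithinAt)
    (fun t _ => (hB t).hasDerivWithinAt) hbound (right_mem_Icc.2 zero_le_one)
  simpa [d] using this

end Descent

theorem min_half_le_min_one_div_mul_sub {w c : ℝ} (hc : 0 < c) :
    min (w / 2) (w ^ 2 / (2 * c)) ≤ min 1 (w / c) * w - c / 2 * min 1 (w / c) ^ 2 := by
  rcases le_or_gt w c with hwc | hcw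
  · rw [min_eq_right ((div_le_one hc).2 hwc)]
    refine (min_le_right _ _).trans_eq ?_
    field_simp
    ring
  · rw [min_eq_left ((one_le_div hc).2 hcw.le)]
    refine (min_le_left _ _).trans ?_
    linarith

theorem min_div_mul_sq_le_min_half {w δ σ γ L : ℝ} (hw : 0 < w) (hδ : 0 < δ) (hδσ : δ ≤ σ)
    (hwγ : w ≤ γ * σ) (hL : 0 < L) :
    min (1 / (2 * γ * σ)) (1 / (2 * L * σ ^ 2)) * w ^ 2 ≤
      min (w / 2) (w ^ 2 / (2 * (L * δ ^ 2))) := by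
  have hγσ : 0 < γ * σ := hw.trans_le hwγ
  refine le_min ((mul_le_mul_of_nonneg_right (min_le_left _ _) (sq_nonneg w)).trans ?_)
    ((mul_le_mul_of_nonneg_right (min_le_right _ _) (sq_nonneg w)).trans ?_)
  · rw [div_mul_eq_mul_div, one_mul, div_le_div_iff₀ (by linarith) two_pos]
    nlinarith
  · rw [div_mul_eq_mul_div, one_mul, ← mul_assoc]
    gcongr

theorem frank_wolfe_key_inequality_general (n : ℕ) (C : Set (EuclideanSpace ℝ (Fin n)))
    (hCconv : Convex ℝ C)
    (f : EuclideanSpace ℝ (Fin n) → ℝ) (hf : ContDiff ℝ 1 f)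
    (L : ℝ) (hL : 0 < L)
    (hLip : ∀ a ∈ C, ∀ b ∈ C, ‖gradient f a - gradient f b‖ ≤ L * ‖a - b‖)
    (x p : ℕ → EuclideanSpace ℝ (Fin n)) (v : ℕ → ℝ)
    (hx0 : x 0 ∈ C) (hpC : ∀ k, p k ∈ C)
    (hv : ∀ k, v k = ⟪gradient f (x k), p k - x k⟫)
    (hiter : ∀ k, x (k + 1) =
      x k + (min 1 (|v k| / (L * ‖p k - x k‖ ^ 2))) • (p k - x k))
    (hvneg : ∀ k, v k < 0)
    (σ : ℝ) (hσb : ∀ k, ‖p k - x k‖ ≤ σ)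
    (γ : ℝ) (hγb : ∀ k, ‖gradient f (x k)‖ ≤ γ)
    (Γ : ℝ) (hΓ : Γ = min (1 / (2 * γ * σ)) (1 / (2 * L * σ ^ 2))) :
    ∀ k, Γ * v k ^ 2 ≤ f (x k) - f (x (k + 1)) := by
  have hstep_mem (k : ℕ) : min 1 (|v k| / (L * ‖p k - x k‖ ^ 2)) ∈ Icc (0 : ℝ) 1 :=
    ⟨le_min zero_le_one (div_nonneg (abs_nonneg _) (mul_nonneg hL.le (sq_nonneg _))),
      min_le_left _ _⟩
  have hxC (k : ℕ) : x k ∈ C := by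
    induction k with
    | zero => exact hx0
    | succ k ih => rw [hiter k]; exact hCconv.add_smul_sub_mem ih (hpC k) (hstep_mem k)
  intro k
  set t := min 1 (|v k| / (L * ‖p k - x k‖ ^ 2))
  have hd : 0 < ‖p k - x k‖ :=
    norm_pos_iff.2 fun h => (hvneg k).ne (by rw [hv k, h, inner_zero_right])
  have hvγσ : |v k| ≤ γ * σ := (hv k ▸ abs_real_inner_le_norm _ _).trans
    (mul_le_mul (hγb k) (hσb k) (norm_nonneg _) ((norm_nonneg _).trans (hγb k)))
  have hdesc := hCconv.le_add_inner_gradient_add_half_mul_sq (hf.differentiable one_ne_zero)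
    hLip (hxC k) (hxC (k + 1))
  rw [hiter k, add_sub_cancel_left, inner_smul_right, ← hv k, norm_smul,
    Real.norm_of_nonneg (hstep_mem k).1, mul_pow, ← hiter k] at hdesc
  have hv_abs : t * v k = -(t * |v k|) := by rw [abs_of_neg (hvneg k)]; ring
  calc Γ * v k ^ 2 = Γ * |v k| ^ 2 := by rw [sq_abs]
    _ ≤ min (|v k| / 2) (|v k| ^ 2 / (2 * (L * ‖p k - x k‖ ^ 2))) := hΓ ▸
        min_div_mul_sq_le_min_half (abs_pos.2 (hvneg k).ne) hd (hσb k) hvγσ hL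
    _ ≤ t * |v k| - L * ‖p k - x k‖ ^ 2 / 2 * t ^ 2 :=
        min_half_le_min_one_div_mul_sub (by positivity)
    _ ≤ f (x k) - f (x (k + 1)) := by linarith

/-- Key decrease inequality for the Frank–Wolfe sequence: with `σ` bounding `‖p k - x k‖`,
`γ` bounding `‖∇f (x k)‖`, and `Γ = min (1/(2γσ)) (1/(2Lσ²))`, one has
`Γ * (v k)² ≤ f (x k) - f (x (k+1))` for all `k`. -/
theorem frank_wolfe_key_inequality (n : ℕ) (C : Set (EuclideanSpace ℝ (Fin n)))
    (hCne : C.Nonempty) (hCcl : IsClosed C) (hCconv : Convex ℝ C)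
    (f : EuclideanSpace ℝ (Fin n) → ℝ) (hf : ContDiff ℝ 1 f)
    (L : ℝ) (hL : 0 < L)
    (hLip : ∀ a ∈ C, ∀ b ∈ C, ‖gradient f a - gradient f b‖ ≤ L * ‖a - b‖)
    (x p : ℕ → EuclideanSpace ℝ (Fin n)) (v : ℕ → ℝ)
    (hx0 : x 0 ∈ C) (hpC : ∀ k, p k ∈ C)
    (hpmin : ∀ k, ∀ q ∈ C, ⟪gradient f (x k), p k - x k⟫ ≤ ⟪gradient f (x k), q - x k⟫)
    (hv : ∀ k, v k = ⟪gradient f (x k), p k - x k⟫)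
    (hiter : ∀ k, x (k + 1) =
      x k + (min 1 (|v k| / (L * ‖p k - x k‖ ^ 2))) • (p k - x k))
    (hvneg : ∀ k, v k < 0)
    (σ : ℝ) (hσ : 0 < σ) (hσb : ∀ k, ‖p k - x k‖ ≤ σ)
    (γ : ℝ) (hγ : 0 < γ) (hγb : ∀ k, ‖gradient f (x k)‖ ≤ γ)
    (Γ : ℝ) (hΓ : Γ = min (1 / (2 * γ * σ)) (1 / (2 * L * σ ^ 2))) :
    ∀ k, Γ * v k ^ 2 ≤ f (x k) - f (x (k + 1)) :=
  frank_wolfe_key_inequality_general n C hCconv f hf L hL hLip x p v hx0 hpC hv hiter hvneg σ hσb γ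
    hγb Γ hΓ
end

section
/- Let n ≥ 1, let e ∈ ℝⁿ be the all-ones vector, let α > 0 and β > 0 satisfy 2α > 3β^{3/2}√n, let a ∈ ℝⁿ, and define f : ℝⁿ → ℝ by f(x) := ⟨a, x⟩ + α⟨x, x⟩ + (β/√(1 + β⟨x, x⟩))·⟨e, x⟩. Then the Hessian of f satisfies (2α − 3β^{3/2}√n)‖v‖² ≤ ⟨∇²f(x)v, v⟩ ≤ (2α + 3β^{3/2}√n)‖v‖² for all x ∈ ℝⁿ₊ and all v ∈ ℝⁿ; consequently f is M-strongly convex on ℝⁿ₊ with M = 2α − 3β^{3/2}√n > 0. -/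
/-!
Restricted to a line `t ↦ x + t • v`, the Hessian form `D²f(x)[v, v]` is an ordinary second
derivative, so a lower bound `m ‖v‖²` makes `t ↦ f (y + t • (x - y)) - m/2 ‖x - y‖² t²` convex on
`[0, 1]`, which is `m`-strong convexity.

For our `f` and `r = √(1 + β ‖x‖²)` the same computation gives
`D²f(x)[v, v] = 2α ‖v‖² + 3β³ ⟪x, v⟫² ⟪e, x⟫ / r⁵ - β² (‖v‖² ⟪e, x⟫ + 2 ⟪x, v⟫ ⟪e, v⟫) / r³`.
By Cauchy–Schwarz the last two terms are at most `β^{3/2} (3b³/r⁵ + 3b/r³) ‖e‖ ‖v‖²` in absolute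
value, where `b = √β ‖x‖`, so `r² = 1 + b²` and `b³ + b r² = b + 2b³ ≤ (1 + b²)² ≤ r⁵`.
Finally `‖e‖ = √n`.
-/

open scoped RealInnerProductSpace

section LineRestriction

variable {E : Type*} [NormedAddCommGroup E] [NormedSpace ℝ E] {f : E → ℝ}

theorem hasDerivAt_add_smul (x v : E) (t : ℝ) : HasDerivAt (fun t : ℝ => x + t • v) v t := by
  simpa using ((hasDerivAt_id t).smul_const v).const_add x

theorem ContDiff.hasDerivAt_comp_add_smul (hf : ContDiff ℝ 2 f) (x v : E) (t : ℝ) :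
    HasDerivAt (fun t : ℝ => f (x + t • v)) (fderiv ℝ f (x + t • v) v) t :=
  ((hf.differentiable (by norm_num)) _).hasFDerivAt.comp_hasDerivAt t (hasDerivAt_add_smul x v t)

theorem ContDiff.hasDerivAt_fderiv_comp_add_smul (hf : ContDiff ℝ 2 f) (x v : E) (t : ℝ) :
    HasDerivAt (fun t : ℝ => fderiv ℝ f (x + t • v) v)
      (iteratedFDeriv ℝ 2 f (x + t • v) ![v, v]) t := by
  have hf' : Differentiable ℝ (fderiv ℝ f) :=
    (hf.fderiv_right (m := 1) (by norm_num)).differentiable (by norm_num)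
  rw [iteratedFDeriv_two_apply]
  exact (ContinuousLinearMap.apply ℝ ℝ v).hasFDerivAt.comp_hasDerivAt t
    ((hf' _).hasFDerivAt.comp_hasDerivAt t (hasDerivAt_add_smul x v t))

theorem ContDiff.iteratedFDeriv_two_eq_of_hasDerivAt_comp_add_smul (hf : ContDiff ℝ 2 f)
    {x v : E} {g' : ℝ → ℝ} {c : ℝ}
    (hg : ∀ t, HasDerivAt (fun t : ℝ => f (x + t • v)) (g' t) t) (hg' : HasDerivAt g' c 0) :
    iteratedFDeriv ℝ 2 f x ![v, v] = c := by
  obtain rfl : g' = fun t => fderiv ℝ f (x + t • v) v :=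
    funext fun t => (hg t).unique (hf.hasDerivAt_comp_add_smul x v t)
  simpa using (hf.hasDerivAt_fderiv_comp_add_smul x v 0).unique hg'

theorem ContDiff.strongConvexOn_of_iteratedFDeriv_two {s : Set E} {m : ℝ} (hf : ContDiff ℝ 2 f)
    (hs : Convex ℝ s) (hm : ∀ x ∈ s, ∀ v, m * ‖v‖ ^ 2 ≤ iteratedFDeriv ℝ 2 f x ![v, v]) :
    StrongConvexOn s m f := by
  refine ⟨hs, fun x hx y hy a b ha hb hab => ?_⟩
  set w := x - y
  have hseg : ∀ t ∈ interior (Set.Icc (0 : ℝ) 1), y + t • w ∈ s := by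
    rw [interior_Icc]
    exact fun t ht => hs.add_smul_sub_mem hy hx ⟨ht.1.le, ht.2.le⟩
  have hg (t : ℝ) : HasDerivAt (fun t : ℝ => f (y + t • w) - m / 2 * ‖w‖ ^ 2 * t ^ 2)
      (fderiv ℝ f (y + t • w) w - m * ‖w‖ ^ 2 * t) t := by
    refine ((hf.hasDerivAt_comp_add_smul y w t).fun_sub
      ((hasDerivAt_pow 2 t).const_mul (m / 2 * ‖w‖ ^ 2))).congr_deriv ?_
    norm_num
    ring
  have hg' (t : ℝ) : HasDerivAt (fun t : ℝ => fderiv ℝ f (y + t • w) w - m * ‖w‖ ^ 2 * t)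
      (iteratedFDeriv ℝ 2 f (y + t • w) ![w, w] - m * ‖w‖ ^ 2) t := by
    simpa using (hf.hasDerivAt_fderiv_comp_add_smul y w t).fun_sub
      ((hasDerivAt_id' t).const_mul (m * ‖w‖ ^ 2))
  have hconv : ConvexOn ℝ (Set.Icc 0 1) fun t : ℝ => f (y + t • w) - m / 2 * ‖w‖ ^ 2 * t ^ 2 :=
    convexOn_of_hasDerivWithinAt2_nonneg (convex_Icc 0 1)
      (fun t _ => (hg t).continuousAt.continuousWithinAt)
      (fun t _ => (hg t).hasDerivWithinAt) (fun t _ => (hg' t).hasDerivWithinAt)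
      fun t ht => sub_nonneg.2 (hm _ (hseg t ht) w)
  have key := hconv.2 (Set.right_mem_Icc.2 zero_le_one) (Set.left_mem_Icc.2 zero_le_one) ha hb hab
  obtain rfl : b = 1 - a := eq_sub_of_add_eq' hab
  have hpt : y + a • w = a • x + (1 - a) • y := by simp only [w]; module
  simp only [smul_eq_mul, mul_one, mul_zero, add_zero, one_smul, zero_smul, hpt, w,
    add_sub_cancel] at key
  simp only [smul_eq_mul, w]
  linear_combination key

end LineRestriction

theorem hasDerivAt_div_sqrt_one_add_mul_pow {β s : ℝ} (c : ℝ) (k : ℕ) (hs : 0 < 1 + β * s) :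
    HasDerivAt (fun s => c / √(1 + β * s) ^ k)
      (-(c * k * β / 2) / √(1 + β * s) ^ (k + 2)) s := by
  have hr : 0 < √(1 + β * s) := Real.sqrt_pos.2 hs
  have hlin : HasDerivAt (fun s : ℝ => 1 + β * s) β s := by
    simpa using ((hasDerivAt_id s).const_mul β).const_add 1
  have hpow : HasDerivAt (fun s => √(1 + β * s) ^ k)
      (k * √(1 + β * s) ^ (k - 1) * (β / (2 * √(1 + β * s)))) s :=
    (hlin.sqrt hs.ne').fun_pow k
  refine ((hasDerivAt_const s c).div hpow (by positivity)).congr_deriv ?_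
  rcases k with _ | k
  · simp
  · simp only [Nat.add_sub_cancel]
    field_simp
    ring

theorem cube_div_sqrt_pow_five_add_div_sqrt_pow_three_le_one (b : ℝ) :
    b ^ 3 / √(1 + b ^ 2) ^ 5 + b / √(1 + b ^ 2) ^ 3 ≤ 1 := by
  set r := √(1 + b ^ 2)
  have hr2 : r ^ 2 = 1 + b ^ 2 := Real.sq_sqrt (by positivity)
  have hr1 : 1 ≤ r := Real.one_le_sqrt.2 (le_add_of_nonneg_right (sq_nonneg b))
  have hr5 : (1 + b ^ 2) ^ 2 ≤ r ^ 5 := by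
    rw [← hr2, ← pow_mul]
    exact pow_le_pow_right₀ hr1 (by norm_num)
  have key : b ^ 3 + b * r ^ 2 ≤ r ^ 5 := by
    rw [hr2]
    nlinarith [sq_nonneg (b ^ 2 - b), sq_nonneg (b - 1)]
  rw [div_add_div _ _ (by positivity) (by positivity), div_le_one (by positivity)]
  linear_combination r ^ 3 * key

section InnerProductSpace

variable {E : Type*} [NormedAddCommGroup E] [InnerProductSpace ℝ E]

theorem hasDerivAt_inner_add_smul (w x v : E) (t : ℝ) :
    HasDerivAt (fun t : ℝ => ⟪w, x + t • v⟫) ⟪w, v⟫ t := by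
  simp only [inner_add_right, real_inner_smul_right]
  simpa using ((hasDerivAt_id t).mul_const ⟪w, v⟫).const_add ⟪w, x⟫

theorem hasDerivAt_inner_self_add_smul (x v : E) (t : ℝ) :
    HasDerivAt (fun t : ℝ => ⟪x + t • v, x + t • v⟫) (2 * ⟪x + t • v, v⟫) t := by
  refine ((hasDerivAt_add_smul x v t).inner ℝ (hasDerivAt_add_smul x v t)).congr_deriv ?_
  rw [real_inner_comm v]
  ring

theorem iteratedFDeriv_two_inner_add_inner_self_add_mul_inner {a e : E} {α : ℝ}
    {φ φ' φ'' : ℝ → ℝ} (hφ : ∀ s, 0 ≤ s → HasDerivAt φ (φ' s) s)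
    (hφ' : ∀ s, 0 ≤ s → HasDerivAt φ' (φ'' s) s)
    (hF : ContDiff ℝ 2 fun z : E => ⟪a, z⟫ + α * ⟪z, z⟫ + φ ⟪z, z⟫ * ⟪e, z⟫) (x v : E) :
    iteratedFDeriv ℝ 2 (fun z : E => ⟪a, z⟫ + α * ⟪z, z⟫ + φ ⟪z, z⟫ * ⟪e, z⟫) x ![v, v] =
      2 * α * ⟪v, v⟫ + 4 * φ'' ⟪x, x⟫ * ⟪x, v⟫ ^ 2 * ⟪e, x⟫
        + 2 * φ' ⟪x, x⟫ * (⟪v, v⟫ * ⟪e, x⟫ + 2 * ⟪x, v⟫ * ⟪e, v⟫) := by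
  have hq (t : ℝ) := hasDerivAt_inner_self_add_smul x v t
  have hq0 (t : ℝ) : 0 ≤ ⟪x + t • v, x + t • v⟫ := real_inner_self_nonneg
  refine hF.iteratedFDeriv_two_eq_of_hasDerivAt_comp_add_smul
    (g' := fun t => ⟪a, v⟫ + α * (2 * ⟪x + t • v, v⟫)
      + (φ' ⟪x + t • v, x + t • v⟫ * (2 * ⟪x + t • v, v⟫) * ⟪e, x + t • v⟫
        + φ ⟪x + t • v, x + t • v⟫ * ⟪e, v⟫)) (fun t => ?_) ?_
  · exact ((hasDerivAt_inner_add_smul a x v t).add ((hq t).const_mul α)).add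
      (((hφ _ (hq0 t)).comp t (hq t)).mul (hasDerivAt_inner_add_smul e x v t))
  · have hxv (t : ℝ) : HasDerivAt (fun t : ℝ => ⟪x + t • v, v⟫) ⟪v, v⟫ t := by
      simpa only [real_inner_comm v] using hasDerivAt_inner_add_smul v x v t
    have := ((((hasDerivAt_const (0 : ℝ) ⟪a, v⟫).add (((hxv 0).const_mul 2).const_mul α)).add
      (((((hφ' _ (hq0 0)).comp 0 (hq 0)).mul ((hxv 0).const_mul 2)).mul
        (hasDerivAt_inner_add_smul e x v 0)).add
      (((hφ _ (hq0 0)).comp 0 (hq 0)).mul (hasDerivAt_const (0 : ℝ) ⟪e, v⟫)))))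
    refine this.congr_deriv ?_
    simp only [Function.comp_apply, Pi.mul_apply, zero_smul, add_zero]
    ring

theorem abs_hessian_perturbation_le {β : ℝ} (hβ : 0 ≤ β) (e x v : E) :
    |3 * β ^ 3 * ⟪x, v⟫ ^ 2 * ⟪e, x⟫ / √(1 + β * ‖x‖ ^ 2) ^ 5
        - β ^ 2 * (‖v‖ ^ 2 * ⟪e, x⟫ + 2 * ⟪x, v⟫ * ⟪e, v⟫) / √(1 + β * ‖x‖ ^ 2) ^ 3|
      ≤ 3 * β ^ ((3 : ℝ) / 2) * ‖e‖ * ‖v‖ ^ 2 := by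
  set s := √β
  set b := s * ‖x‖
  have hβs : β = s ^ 2 := (Real.sq_sqrt hβ).symm
  have hr : √(1 + β * ‖x‖ ^ 2) = √(1 + b ^ 2) := by rw [hβs, mul_pow]
  have hs32 : β ^ ((3 : ℝ) / 2) = s ^ 3 := by
    simp only [s]
    rw [Real.sqrt_eq_rpow, ← Real.rpow_natCast, ← Real.rpow_mul hβ]; norm_num
  have hxv := abs_real_inner_le_norm x v
  have hex := abs_real_inner_le_norm e x
  have hev := abs_real_inner_le_norm e v
  rw [hr, hs32]
  set r := √(1 + b ^ 2)
  have hr0 : 0 < r := Real.sqrt_pos.2 (by positivity)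
  calc _ ≤ |3 * β ^ 3 * ⟪x, v⟫ ^ 2 * ⟪e, x⟫| / r ^ 5
        + |β ^ 2 * (‖v‖ ^ 2 * ⟪e, x⟫ + 2 * ⟪x, v⟫ * ⟪e, v⟫)| / r ^ 3 := by
        refine (abs_sub _ _).trans_eq ?_
        rw [abs_div, abs_div, abs_of_pos (pow_pos hr0 5), abs_of_pos (pow_pos hr0 3)]
    _ ≤ 3 * β ^ 3 * (‖x‖ * ‖v‖) ^ 2 * (‖e‖ * ‖x‖) / r ^ 5
        + β ^ 2 * (‖v‖ ^ 2 * (‖e‖ * ‖x‖) + 2 * (‖x‖ * ‖v‖) * (‖e‖ * ‖v‖)) / r ^ 3 := by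
        gcongr ?_ / _ + ?_ / _
        · rw [abs_mul, abs_mul, abs_mul, abs_pow, abs_pow, abs_of_nonneg hβ,
            abs_of_pos three_pos]
          gcongr
        · rw [abs_mul, abs_of_nonneg (by positivity : 0 ≤ β ^ 2)]
          gcongr
          refine (abs_add_le _ _).trans ?_
          rw [abs_mul, abs_mul, abs_mul, abs_of_nonneg (sq_nonneg _), abs_two]
          gcongr
    _ = 3 * s ^ 3 * (b ^ 3 / r ^ 5 + b / r ^ 3) * ‖e‖ * ‖v‖ ^ 2 := by
        rw [hβs]; ring
    _ ≤ 3 * s ^ 3 * ‖e‖ * ‖v‖ ^ 2 := by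
        have h1 := cube_div_sqrt_pow_five_add_div_sqrt_pow_three_le_one b
        have h0 : 0 ≤ 3 * s ^ 3 * ‖e‖ * ‖v‖ ^ 2 := by positivity
        nlinarith

noncomputable def perturbedQuadratic (a e : E) (α β : ℝ) (z : E) : ℝ :=
  ⟪a, z⟫ + α * ⟪z, z⟫ + β / √(1 + β * ⟪z, z⟫) * ⟪e, z⟫

theorem contDiff_perturbedQuadratic (a e : E) (α : ℝ) {β : ℝ} (hβ : 0 ≤ β) :
    ContDiff ℝ 2 (perturbedQuadratic a e α β) := by
  have hq : ContDiff ℝ 2 fun z : E => ⟪z, z⟫ := contDiff_id.inner ℝ contDiff_id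
  have hpos (z : E) : 0 < 1 + β * ⟪z, z⟫ :=
    add_pos_of_pos_of_nonneg one_pos (mul_nonneg hβ real_inner_self_nonneg)
  exact ((innerSL ℝ a).contDiff.add (contDiff_const.mul hq)).add
    ((contDiff_const.div ((contDiff_const.add (contDiff_const.mul hq)).sqrt
      fun z => (hpos z).ne') fun z => (Real.sqrt_pos.2 (hpos z)).ne').mul (innerSL ℝ e).contDiff)

theorem iteratedFDeriv_two_perturbedQuadratic (a e : E) (α : ℝ) {β : ℝ} (hβ : 0 ≤ β) (x v : E) :
    iteratedFDeriv ℝ 2 (perturbedQuadratic a e α β) x ![v, v] =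
      2 * α * ‖v‖ ^ 2 + (3 * β ^ 3 * ⟪x, v⟫ ^ 2 * ⟪e, x⟫ / √(1 + β * ‖x‖ ^ 2) ^ 5
        - β ^ 2 * (‖v‖ ^ 2 * ⟪e, x⟫ + 2 * ⟪x, v⟫ * ⟪e, v⟫) / √(1 + β * ‖x‖ ^ 2) ^ 3) := by
  have hφ (s : ℝ) (hs : 0 ≤ s) : HasDerivAt (fun s => β / √(1 + β * s))
      (-(β ^ 2 / 2) / √(1 + β * s) ^ 3) s := by
    simpa [sq] using hasDerivAt_div_sqrt_one_add_mul_pow β 1 (by positivity : 0 < 1 + β * s)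
  have hφ' (s : ℝ) (hs : 0 ≤ s) : HasDerivAt (fun s => -(β ^ 2 / 2) / √(1 + β * s) ^ 3)
      (3 * β ^ 3 / 4 / √(1 + β * s) ^ 5) s := by
    refine (hasDerivAt_div_sqrt_one_add_mul_pow _ 3 (by positivity : 0 < 1 + β * s)).congr_deriv ?_
    ring
  unfold perturbedQuadratic
  rw [iteratedFDeriv_two_inner_add_inner_self_add_mul_inner hφ hφ'
    (contDiff_perturbedQuadratic a e α hβ), real_inner_self_eq_norm_sq, real_inner_self_eq_norm_sq]
  ring

theorem abs_iteratedFDeriv_two_perturbedQuadratic_sub_le (a e : E) (α : ℝ) {β : ℝ} (hβ : 0 ≤ β)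
    (x v : E) :
    |iteratedFDeriv ℝ 2 (perturbedQuadratic a e α β) x ![v, v] - 2 * α * ‖v‖ ^ 2|
      ≤ 3 * β ^ ((3 : ℝ) / 2) * ‖e‖ * ‖v‖ ^ 2 := by
  rw [iteratedFDeriv_two_perturbedQuadratic a e α hβ, add_sub_cancel_left]
  exact abs_hessian_perturbation_le hβ e x v

end InnerProductSpace

theorem hessian_bounds_example_general (n : ℕ)
    (e : EuclideanSpace ℝ (Fin n)) (he : ∀ i, e i = 1)
    (α β : ℝ) (hβ : 0 < β)
    (hαβ : 3 * β ^ ((3 : ℝ) / 2) * Real.sqrt n < 2 * α)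
    (a : EuclideanSpace ℝ (Fin n))
    (f : EuclideanSpace ℝ (Fin n) → ℝ)
    (hf : ∀ z : EuclideanSpace ℝ (Fin n),
      f z = ⟪a, z⟫ + α * ⟪z, z⟫ + (β / Real.sqrt (1 + β * ⟪z, z⟫)) * ⟪e, z⟫)
    (M : ℝ) (hM : M = 2 * α - 3 * β ^ ((3 : ℝ) / 2) * Real.sqrt n) :
    (∀ x : EuclideanSpace ℝ (Fin n), (∀ i, 0 ≤ x i) →
      ∀ v : EuclideanSpace ℝ (Fin n),
        M * ‖v‖ ^ 2 ≤ iteratedFDeriv ℝ 2 f x ![v, v] ∧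
        iteratedFDeriv ℝ 2 f x ![v, v]
          ≤ (2 * α + 3 * β ^ ((3 : ℝ) / 2) * Real.sqrt n) * ‖v‖ ^ 2) ∧
    0 < M ∧
    (∀ x : EuclideanSpace ℝ (Fin n), (∀ i, 0 ≤ x i) →
      ∀ y : EuclideanSpace ℝ (Fin n), (∀ i, 0 ≤ y i) →
      ∀ t : ℝ, 0 ≤ t → t ≤ 1 →
        f (t • x + (1 - t) • y)
          ≤ t * f x + (1 - t) * f y - M / 2 * t * (1 - t) * ‖x - y‖ ^ 2) := by
  obtain rfl : f = perturbedQuadratic a e α β := funext hf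
  have hen : ‖e‖ = √n := by simp [EuclideanSpace.norm_eq, he]
  have hhess (x v : EuclideanSpace ℝ (Fin n)) := abs_le.1
    (hen ▸ abs_iteratedFDeriv_two_perturbedQuadratic_sub_le a e α hβ.le x v)
  have hlower (x v : EuclideanSpace ℝ (Fin n)) :
      M * ‖v‖ ^ 2 ≤ iteratedFDeriv ℝ 2 (perturbedQuadratic a e α β) x ![v, v] := by
    rw [hM]; linarith [(hhess x v).1]
  have hconvex : StrongConvexOn Set.univ M (perturbedQuadratic a e α β) :=
    (contDiff_perturbedQuadratic a e α hβ.le).strongConvexOn_of_iteratedFDeriv_two convex_univ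
      fun x _ v => hlower x v
  refine ⟨fun x _ v => ⟨hlower x v, by linarith [(hhess x v).2]⟩, by linarith,
    fun x _ y _ t ht0 ht1 => ?_⟩
  have := hconvex.2 (Set.mem_univ x) (Set.mem_univ y) ht0 (sub_nonneg.2 ht1) (by ring)
  simp only [smul_eq_mul] at this
  linarith

/-- For `f(x) = ⟨a,x⟩ + α⟨x,x⟩ + (β/√(1+β⟨x,x⟩))⟨e,x⟩` with `e` the all-ones vector and
`2α > 3β^{3/2}√n`, the Hessian satisfies
`(2α − 3β^{3/2}√n)‖v‖² ≤ ⟨∇²f(x)v, v⟩ ≤ (2α + 3β^{3/2}√n)‖v‖²` on the nonnegative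
orthant; consequently `f` is `M`-strongly convex there with `M = 2α − 3β^{3/2}√n > 0`. -/
theorem hessian_bounds_example (n : ℕ) (hn : 1 ≤ n)
    (e : EuclideanSpace ℝ (Fin n)) (he : ∀ i, e i = 1)
    (α β : ℝ) (hα : 0 < α) (hβ : 0 < β)
    (hαβ : 3 * β ^ ((3 : ℝ) / 2) * Real.sqrt n < 2 * α)
    (a : EuclideanSpace ℝ (Fin n))
    (f : EuclideanSpace ℝ (Fin n) → ℝ)
    (hf : ∀ z : EuclideanSpace ℝ (Fin n),
      f z = ⟪a, z⟫ + α * ⟪z, z⟫ + (β / Real.sqrt (1 + β * ⟪z, z⟫)) * ⟪e, z⟫)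
    (M : ℝ) (hM : M = 2 * α - 3 * β ^ ((3 : ℝ) / 2) * Real.sqrt n) :
    (∀ x : EuclideanSpace ℝ (Fin n), (∀ i, 0 ≤ x i) →
      ∀ v : EuclideanSpace ℝ (Fin n),
        M * ‖v‖ ^ 2 ≤ iteratedFDeriv ℝ 2 f x ![v, v] ∧
        iteratedFDeriv ℝ 2 f x ![v, v]
          ≤ (2 * α + 3 * β ^ ((3 : ℝ) / 2) * Real.sqrt n) * ‖v‖ ^ 2) ∧
    0 < M ∧
    (∀ x : EuclideanSpace ℝ (Fin n), (∀ i, 0 ≤ x i) →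
      ∀ y : EuclideanSpace ℝ (Fin n), (∀ i, 0 ≤ y i) →
      ∀ t : ℝ, 0 ≤ t → t ≤ 1 →
        f (t • x + (1 - t) • y)
          ≤ t * f x + (1 - t) * f y - M / 2 * t * (1 - t) * ‖x - y‖ ^ 2) :=
  hessian_bounds_example_general n e he α β hβ hαβ a f hf M hM
end
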